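/- arXiv:2202.03783 — 8 statements merged into one kernel-verified Lean document; each statement's English description precedes it below -/
import Mathlib

section
/- Let λ₁ > λ₂ > ... > λ_N > 0 be real numbers and φ₁,...,φ_N real. Define the N×N complex matrix 𝒜 by 𝒜_{kj} = (i/(2π)) (λ_j² - λ_jλ_k e^{i(φ_j-φ_k)})/(λ_j² - λ_k²) for j ≠ k, and with diagonal entries 𝒜_{jj} having imaginary part 1/(4π). Then Im 𝒜 := (𝒜 - 𝒜*)/(2i) equals the rank-one operator (1/(4π)) ⟨·, 𝟙⟩ 𝟙, where 𝟙 = (1,...,1)ᵀ ∈ ℂᴺ. -/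
open Matrix ComplexConjugate

/-- For `λ₁ > ... > λ_N > 0` and real `φ_j`, the matrix `𝒜` with off-diagonal entries
`𝒜_{kj} = (i/(2π)) (λ_j² - λ_j λ_k e^{i(φ_j - φ_k)})/(λ_j² - λ_k²)` and diagonal entries of
imaginary part `1/(4π)` satisfies `Im 𝒜 = (𝒜 - 𝒜*)/(2i) = (1/(4π)) ⟨·,𝟙⟩𝟙`, the rank-one
operator whose matrix has all entries equal to `1/(4π)`. -/
theorem im_A_rank_one
    (N : ℕ) (lam φ : Fin N → ℝ)
    (hpos : ∀ j, 0 < lam j)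
    (hdec : ∀ j k : Fin N, j < k → lam k < lam j)
    (A : Matrix (Fin N) (Fin N) ℂ)
    (hoff : ∀ j k : Fin N, j ≠ k → A k j =
      (Complex.I / (2 * (Real.pi : ℂ))) *
        ((lam j : ℂ) ^ 2 -
          (lam j : ℂ) * (lam k : ℂ) * Complex.exp (Complex.I * ((φ j : ℂ) - (φ k : ℂ)))) /
        ((lam j : ℂ) ^ 2 - (lam k : ℂ) ^ 2))
    (hdiag : ∀ j : Fin N, (A j j).im = 1 / (4 * Real.pi)) :
    (2 * Complex.I)⁻¹ • (A - Aᴴ) =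
      ((1 : ℂ) / (4 * (Real.pi : ℂ))) • Matrix.of (fun _ _ : Fin N => (1 : ℂ)) := by
  have hlamne : ∀ j k : Fin N, j ≠ k → ((lam j : ℂ) ^ 2 - (lam k : ℂ) ^ 2) ≠ 0 := by
    intro j k hjk
    have h1 : lam j ≠ lam k := by
      rcases lt_or_gt_of_ne hjk with h | h
      · exact (hdec j k h).ne'
      · exact (hdec k j h).ne
    have h2 : (lam j) ^ 2 ≠ (lam k) ^ 2 := by
      intro h
      apply h1
      nlinarith [hpos j, hpos k]
    rw [sub_ne_zero]
    exact_mod_cast fun h => h2 (by exact_mod_cast h)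
  have hpi : (Real.pi : ℂ) ≠ 0 := Complex.ofReal_ne_zero.mpr Real.pi_ne_zero
  ext k j
  simp only [Matrix.smul_apply, Matrix.sub_apply, Matrix.conjTranspose_apply, Matrix.of_apply,
    smul_eq_mul, mul_one, Complex.star_def]
  by_cases h : k = j
  · subst h
    rw [Complex.sub_conj, hdiag k]
    push_cast
    field_simp [Complex.I_ne_zero]
  · have h' : j ≠ k := fun e => h e.symm
    rw [hoff j k h', hoff k j h]
    have hexp : (starRingEnd ℂ) (Complex.exp (Complex.I * ((φ k : ℂ) - (φ j : ℂ)))) =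
        Complex.exp (Complex.I * ((φ j : ℂ) - (φ k : ℂ))) := by
      rw [← Complex.exp_conj]
      congr 1
      simp only [_root_.map_mul, map_sub, Complex.conj_I, Complex.conj_ofReal]
      ring
    have htwo : (starRingEnd ℂ) (2 * (Real.pi : ℂ)) = 2 * (Real.pi : ℂ) := by
      rw [_root_.map_mul, Complex.conj_ofReal, map_ofNat]
    have hc : (starRingEnd ℂ) (Complex.I / (2 * (Real.pi : ℂ)) *
        ((lam k : ℂ) ^ 2 - (lam k : ℂ) * (lam j : ℂ) *
          Complex.exp (Complex.I * ((φ k : ℂ) - (φ j : ℂ)))) /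
        ((lam k : ℂ) ^ 2 - (lam j : ℂ) ^ 2)) =
        (-Complex.I / (2 * (Real.pi : ℂ))) *
        ((lam k : ℂ) ^ 2 - (lam k : ℂ) * (lam j : ℂ) *
          Complex.exp (Complex.I * ((φ j : ℂ) - (φ k : ℂ)))) /
        ((lam k : ℂ) ^ 2 - (lam j : ℂ) ^ 2) := by
      simp only [map_div₀, _root_.map_mul, map_sub, map_pow, Complex.conj_I,
        Complex.conj_ofReal, hexp, htwo]
    rw [hc]
    have h1 := hlamne j k h'
    have h2 := hlamne k j h
    rw [inv_mul_eq_div, div_eq_div_iff (by simp [Complex.I_ne_zero]) (by simp [hpi])]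
    field_simp
    ring
end

section
/- Let λ₁ > ... > λ_N > 0, let φ₁,...,φ_N be real, and define the N×N matrix 𝒜 by 𝒜_{kj} = (i/(2π)) (λ_j² - λ_jλ_k e^{i(φ_j-φ_k)})/(λ_j² - λ_k²) for j ≠ k (diagonal entries arbitrary). Define the anti-linear map ℋ on ℂᴺ by (ℋf)_j = λ_j e^{-iφ_j} conj(f_j). Then 𝒜* ℋ = ℋ 𝒜, i.e. for every f ∈ ℂᴺ, 𝒜*(ℋf) = ℋ(𝒜f); equivalently, conj(𝒜_{jk}) λ_j e^{-iφ_j} = conj(𝒜_{kj}) λ_k e^{-iφ_k} for all j,k. -/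
open Matrix ComplexConjugate

/-- For `λ₁ > ... > λ_N > 0`, real `φ_j`, and `𝒜` with the prescribed off-diagonal entries
(diagonal arbitrary), the anti-linear map `(ℋf)_j = λ_j e^{-iφ_j} conj(f_j)` satisfies
`𝒜* ℋ = ℋ 𝒜`; equivalently `conj(𝒜_{jk}) λ_j e^{-iφ_j} = conj(𝒜_{kj}) λ_k e^{-iφ_k}`. -/
theorem A_intertwines_H
    (N : ℕ) (lam φ : Fin N → ℝ)
    (hpos : ∀ j, 0 < lam j)
    (hdec : ∀ j k : Fin N, j < k → lam k < lam j)
    (A : Matrix (Fin N) (Fin N) ℂ)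
    (hoff : ∀ j k : Fin N, j ≠ k → A k j =
      (Complex.I / (2 * (Real.pi : ℂ))) *
        ((lam j : ℂ) ^ 2 -
          (lam j : ℂ) * (lam k : ℂ) * Complex.exp (Complex.I * ((φ j : ℂ) - (φ k : ℂ)))) /
        ((lam j : ℂ) ^ 2 - (lam k : ℂ) ^ 2)) :
    (∀ f : Fin N → ℂ,
      Aᴴ *ᵥ (fun j => (lam j : ℂ) * Complex.exp (-Complex.I * (φ j : ℂ)) * conj (f j)) =
        fun j => (lam j : ℂ) * Complex.exp (-Complex.I * (φ j : ℂ)) * conj ((A *ᵥ f) j)) ∧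
    ∀ j k : Fin N,
      conj (A j k) * (lam j : ℂ) * Complex.exp (-Complex.I * (φ j : ℂ)) =
        conj (A k j) * (lam k : ℂ) * Complex.exp (-Complex.I * (φ k : ℂ)) := by
  -- nonvanishing of the denominators
  have hsq : ∀ j k : Fin N, j ≠ k → (lam j) ^ 2 ≠ (lam k) ^ 2 := by
    intro j k h
    rcases h.lt_or_gt with hl | hl
    · have := hdec j k hl
      have := hpos k
      nlinarith
    · have := hdec k j hl
      have := hpos j
      nlinarith
  have hne : ∀ j k : Fin N, j ≠ k → (lam j : ℂ) ^ 2 - (lam k : ℂ) ^ 2 ≠ 0 := by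
    intro j k h
    have : ((lam j : ℂ)) ^ 2 ≠ ((lam k : ℂ)) ^ 2 := by exact_mod_cast hsq j k h
    exact sub_ne_zero.mpr this
  -- the key pointwise identity
  have key : ∀ j k : Fin N,
      conj (A j k) * (lam j : ℂ) * Complex.exp (-Complex.I * (φ j : ℂ)) =
        conj (A k j) * (lam k : ℂ) * Complex.exp (-Complex.I * (φ k : ℂ)) := by
    intro j k
    by_cases hjk : j = k
    · subst hjk; rfl
    rw [hoff j k hjk, hoff k j (Ne.symm hjk)]
    have e1 : Complex.exp (-Complex.I * (φ j : ℂ)) = (Complex.exp (Complex.I * (φ j : ℂ)))⁻¹ := by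
      rw [← Complex.exp_neg]; ring_nf
    have e2 : Complex.exp (-Complex.I * (φ k : ℂ)) = (Complex.exp (Complex.I * (φ k : ℂ)))⁻¹ := by
      rw [← Complex.exp_neg]; ring_nf
    have e3 : ∀ a b : Fin N, conj (Complex.exp (Complex.I * ((φ a : ℂ) - (φ b : ℂ)))) =
        Complex.exp (Complex.I * (φ b : ℂ)) * (Complex.exp (Complex.I * (φ a : ℂ)))⁻¹ := by
      intro a b
      rw [← Complex.exp_conj, ← Complex.exp_neg, ← Complex.exp_add]
      congr 1
      simp [_root_.map_mul, Complex.conj_I, map_sub, Complex.conj_ofReal]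
      ring
    have ea : Complex.exp (Complex.I * (φ j : ℂ)) ≠ 0 := Complex.exp_ne_zero _
    have eb : Complex.exp (Complex.I * (φ k : ℂ)) ≠ 0 := Complex.exp_ne_zero _
    have h2pi : (2 : ℂ) * (Real.pi : ℂ) ≠ 0 := by
      simp [Real.pi_ne_zero, Complex.ofReal_ne_zero]
    have hne1 := hne j k hjk
    have hne2 := hne k j (Ne.symm hjk)
    simp only [map_div₀, _root_.map_mul, map_sub, map_pow, Complex.conj_I,
      Complex.conj_ofReal, map_ofNat, e1, e2, e3]
    field_simp
    ring
  refine ⟨?_, key⟩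
  intro f
  funext x
  simp only [mulVec, dotProduct, conjTranspose_apply, RCLike.star_def, map_sum, _root_.map_mul, Finset.mul_sum]
  refine Finset.sum_congr rfl fun k _ => ?_
  linear_combination conj (f k) * key k x
end

section
/- Let 𝒜 be an N×N complex matrix with Im 𝒜 = (1/(4π)) ⟨·,𝟙⟩𝟙 (a rank-one positive semi-definite operator with range spanned by 𝟙 = (1,...,1)ᵀ), and suppose there is an anti-linear map ℋ on ℂᴺ given by (ℋf)_j = λ_j e^{-iφ_j} conj(f_j) with λ_j > 0 pairwise distinct, such that 𝒜*ℋ = ℋ𝒜. Then every eigenvalue of 𝒜 has strictly positive imaginary part. -/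
open Matrix ComplexConjugate

/-- Let `𝒜` be an `N×N` matrix with `Im 𝒜 = (1/(4π)) ⟨·,𝟙⟩𝟙` and suppose the anti-linear
map `(ℋf)_j = λ_j e^{-iφ_j} conj(f_j)`, with `λ_j > 0` pairwise distinct, intertwines:
`𝒜* ℋ = ℋ 𝒜`.  Then every eigenvalue of `𝒜` has strictly positive imaginary part. -/
theorem eigenvalues_in_open_upper_half_plane
    (N : ℕ) (lam φ : Fin N → ℝ)
    (hpos : ∀ j, 0 < lam j)
    (hinj : Function.Injective lam)
    (A : Matrix (Fin N) (Fin N) ℂ)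
    (hIm : (2 * Complex.I)⁻¹ • (A - Aᴴ) =
      ((1 : ℂ) / (4 * (Real.pi : ℂ))) • Matrix.of (fun _ _ : Fin N => (1 : ℂ)))
    (hcomm : ∀ f : Fin N → ℂ,
      Aᴴ *ᵥ (fun j => (lam j : ℂ) * Complex.exp (-Complex.I * (φ j : ℂ)) * conj (f j)) =
        fun j => (lam j : ℂ) * Complex.exp (-Complex.I * (φ j : ℂ)) * conj ((A *ᵥ f) j)) :
    ∀ (μ : ℂ) (f : Fin N → ℂ), f ≠ 0 → A *ᵥ f = μ • f → 0 < μ.im := by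
  intro μ f hf hAf
  by_contra hle
  push_neg at hle
  have hπ : (0:ℝ) < Real.pi := Real.pi_pos
  set c : ℂ := (1 : ℂ) / (4 * (Real.pi : ℂ)) with hc_def
  have h2I : (2 * Complex.I) ≠ 0 := by simp [Complex.I_ne_zero]
  have hc : c ≠ 0 := by
    simp only [hc_def, div_ne_zero_iff]
    constructor
    · norm_num
    · simp only [ne_eq, mul_eq_zero]
      push_neg
      exact ⟨by norm_num, by exact_mod_cast hπ.ne'⟩
  have hA : A - Aᴴ = (2 * Complex.I * c) • Matrix.of (fun _ _ : Fin N => (1 : ℂ)) := by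
    calc A - Aᴴ = (2 * Complex.I) • ((2 * Complex.I)⁻¹ • (A - Aᴴ)) :=
          (smul_inv_smul₀ h2I _).symm
      _ = (2 * Complex.I * c) • Matrix.of (fun _ _ : Fin N => (1 : ℂ)) := by
          rw [hIm, smul_smul]
  have hsub : ∀ g : Fin N → ℂ, ∀ j, ((A - Aᴴ) *ᵥ g) j
      = 2 * Complex.I * c * (∑ k, g k) := by
    intro g j
    rw [hA]
    simp [Matrix.mulVec, dotProduct, Finset.mul_sum]
  -- sesquilinearity
  have sesq : ∀ g h : Fin N → ℂ,
      ∑ j, conj (g j) * ((Aᴴ *ᵥ h) j) = conj (∑ j, conj (h j) * ((A *ᵥ g) j)) := by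
    intro g h
    simp only [Matrix.mulVec, dotProduct, Matrix.conjTranspose_apply, _root_.map_sum,
      _root_.map_mul, Complex.conj_conj, Finset.mul_sum]
    rw [Finset.sum_comm]
    refine Finset.sum_congr rfl fun j _ => Finset.sum_congr rfl fun k _ => ?_
    simp only [starRingEnd_apply, star_star, star_mul']
    ring
  -- core complex identity for eigenvectors of A
  have core : ∀ g : Fin N → ℂ, A *ᵥ g = μ • g →
      (μ - conj μ) * (∑ j, conj (g j) * g j)
        = 2 * Complex.I * c * (conj (∑ k, g k) * ∑ k, g k) := by
    intro g hg
    have e1 : ∑ j, conj (g j) * ((A *ᵥ g) j) = μ * ∑ j, conj (g j) * g j := by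
      rw [hg, Finset.mul_sum]
      refine Finset.sum_congr rfl fun j _ => ?_
      simp [Pi.smul_apply, smul_eq_mul]
      ring
    have e2 : ∑ j, conj (g j) * ((Aᴴ *ᵥ g) j) = conj μ * ∑ j, conj (g j) * g j := by
      rw [sesq g g, e1, _root_.map_mul, _root_.map_sum]
      congr 1
      refine Finset.sum_congr rfl fun j _ => ?_
      simp [_root_.map_mul, Complex.conj_conj]
      ring
    have e3 : ∑ j, conj (g j) * (((A - Aᴴ) *ᵥ g) j)
        = 2 * Complex.I * c * (conj (∑ k, g k) * ∑ k, g k) := by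
      have : ∀ j, (((A - Aᴴ) *ᵥ g) j) = 2 * Complex.I * c * (∑ k, g k) := hsub g
      calc ∑ j, conj (g j) * (((A - Aᴴ) *ᵥ g) j)
          = ∑ j, conj (g j) * (2 * Complex.I * c * (∑ k, g k)) := by
            refine Finset.sum_congr rfl fun j _ => by rw [this j]
        _ = (∑ j, conj (g j)) * (2 * Complex.I * c * (∑ k, g k)) := by
            rw [← Finset.sum_mul]
        _ = 2 * Complex.I * c * (conj (∑ k, g k) * ∑ k, g k) := by
            rw [_root_.map_sum]; ring
    have e4 : ∀ j, (((A - Aᴴ) *ᵥ g) j) = ((A *ᵥ g) j) - ((Aᴴ *ᵥ g) j) := by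
      intro j; rw [Matrix.sub_mulVec]; rfl
    calc (μ - conj μ) * (∑ j, conj (g j) * g j)
        = ∑ j, conj (g j) * ((A *ᵥ g) j) - ∑ j, conj (g j) * ((Aᴴ *ᵥ g) j) := by
          rw [e1, e2]; ring
      _ = ∑ j, conj (g j) * (((A - Aᴴ) *ᵥ g) j) := by
          rw [← Finset.sum_sub_distrib]
          refine Finset.sum_congr rfl fun j _ => ?_
          rw [e4 j]; ring
      _ = 2 * Complex.I * c * (conj (∑ k, g k) * ∑ k, g k) := e3
  -- real form
  have real_core : ∀ g : Fin N → ℂ, A *ᵥ g = μ • g →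
      μ.im * (∑ j, Complex.normSq (g j))
        = (1 / (4 * Real.pi)) * Complex.normSq (∑ k, g k) := by
    intro g hg
    have hcore := core g hg
    have hn : ((∑ j, Complex.normSq (g j) : ℝ) : ℂ) = ∑ j, conj (g j) * g j := by
      rw [Complex.ofReal_sum]
      exact Finset.sum_congr rfl fun j _ => Complex.normSq_eq_conj_mul_self
    have hs : ((Complex.normSq (∑ k, g k) : ℝ) : ℂ)
        = conj (∑ k, g k) * (∑ k, g k) := Complex.normSq_eq_conj_mul_self
    have Ec : (2 * Complex.I) * ((μ.im : ℂ) * ((∑ j, Complex.normSq (g j) : ℝ) : ℂ))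
        = (2 * Complex.I) * (c * ((Complex.normSq (∑ k, g k) : ℝ) : ℂ)) := by
      rw [hn, hs]
      have hsc := Complex.sub_conj μ
      push_cast at hsc
      linear_combination hcore - (∑ j, conj (g j) * g j) * hsc
    have Ec' : (μ.im : ℂ) * ((∑ j, Complex.normSq (g j) : ℝ) : ℂ)
        = c * ((Complex.normSq (∑ k, g k) : ℝ) : ℂ) := mul_left_cancel₀ h2I Ec
    apply Complex.ofReal_injective
    rw [Complex.ofReal_mul, Complex.ofReal_mul, Ec', hc_def]
    push_cast
    ring
  -- positivity of ∑ normSq f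
  have hfpos : 0 < ∑ j, Complex.normSq (f j) := by
    obtain ⟨j, hj⟩ := Function.ne_iff.mp hf
    refine Finset.sum_pos' (fun i _ => Complex.normSq_nonneg _) ⟨j, Finset.mem_univ j, ?_⟩
    exact Complex.normSq_pos.mpr hj
  have him0 : μ.im = 0 := by
    have h1 := real_core f hAf
    have h2 : (0:ℝ) ≤ Complex.normSq (∑ k, f k) := Complex.normSq_nonneg _
    have h3 : (0:ℝ) ≤ 1 / (4 * Real.pi) := by positivity
    refine le_antisymm hle ?_
    nlinarith
  have hμconj : conj μ = μ := Complex.conj_eq_iff_im.mpr him0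
  -- kernel vectors sum to zero
  have sumzero : ∀ g : Fin N → ℂ, A *ᵥ g = μ • g → ∑ k, g k = 0 := by
    intro g hg
    have h1 := real_core g hg
    rw [him0, zero_mul] at h1
    have h2 : Complex.normSq (∑ k, g k) = 0 := by
      have hpi : (0:ℝ) < 1 / (4 * Real.pi) := by positivity
      nlinarith [Complex.normSq_nonneg (∑ k, g k)]
    exact Complex.normSq_eq_zero.mp h2
  -- from eigenvector of Aᴴ (with real μ) to eigenvector of A
  have core2 : ∀ h : Fin N → ℂ, Aᴴ *ᵥ h = μ • h → A *ᵥ h = μ • h := by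
    intro h hh
    have e2 : ∑ j, conj (h j) * ((Aᴴ *ᵥ h) j) = μ * ∑ j, conj (h j) * h j := by
      rw [hh, Finset.mul_sum]
      refine Finset.sum_congr rfl fun j _ => ?_
      simp [Pi.smul_apply, smul_eq_mul]; ring
    have e1 : ∑ j, conj (h j) * ((A *ᵥ h) j) = μ * ∑ j, conj (h j) * h j := by
      have := sesq h h
      have h3 : ∑ j, conj (h j) * ((A *ᵥ h) j)
          = conj (∑ j, conj (h j) * ((Aᴴ *ᵥ h) j)) := by
        rw [this, Complex.conj_conj]
      rw [h3, e2, _root_.map_mul, hμconj, _root_.map_sum]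
      congr 1
      refine Finset.sum_congr rfl fun j _ => ?_
      simp [_root_.map_mul, Complex.conj_conj]; ring
    -- the sum over h vanishes
    have e5 : ∑ j, conj (h j) * (((A - Aᴴ) *ᵥ h) j) = 0 := by
      have e4 : ∀ j, (((A - Aᴴ) *ᵥ h) j) = ((A *ᵥ h) j) - ((Aᴴ *ᵥ h) j) := by
        intro j; rw [Matrix.sub_mulVec]; rfl
      calc ∑ j, conj (h j) * (((A - Aᴴ) *ᵥ h) j)
          = ∑ j, conj (h j) * ((A *ᵥ h) j) - ∑ j, conj (h j) * ((Aᴴ *ᵥ h) j) := by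
            rw [← Finset.sum_sub_distrib]
            refine Finset.sum_congr rfl fun j _ => by rw [e4 j]; ring
        _ = 0 := by rw [e1, e2]; ring
    have e6 : ∑ j, conj (h j) * (((A - Aᴴ) *ᵥ h) j)
        = 2 * Complex.I * c * (conj (∑ k, h k) * ∑ k, h k) := by
      calc ∑ j, conj (h j) * (((A - Aᴴ) *ᵥ h) j)
          = ∑ j, conj (h j) * (2 * Complex.I * c * (∑ k, h k)) := by
            refine Finset.sum_congr rfl fun j _ => by rw [hsub h j]
        _ = (∑ j, conj (h j)) * (2 * Complex.I * c * (∑ k, h k)) := by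
            rw [← Finset.sum_mul]
        _ = 2 * Complex.I * c * (conj (∑ k, h k) * ∑ k, h k) := by
            rw [_root_.map_sum]; ring
    have hsum0 : ∑ k, h k = 0 := by
      have h7 : 2 * Complex.I * c * (conj (∑ k, h k) * ∑ k, h k) = 0 := by
        rw [← e6, e5]
      have h8 : conj (∑ k, h k) * ∑ k, h k = 0 := by
        rcases mul_eq_zero.mp h7 with h9 | h9
        · exact absurd h9 (mul_ne_zero h2I hc)
        · exact h9
      rcases mul_eq_zero.mp h8 with h9 | h9
      · simpa using (star_eq_zero.mp h9)
      · exact h9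
    funext j
    have h10 : ((A - Aᴴ) *ᵥ h) j = 0 := by rw [hsub h j, hsum0, mul_zero]
    have h11 : (A *ᵥ h) j - (Aᴴ *ᵥ h) j = 0 := by
      rw [← h10, Matrix.sub_mulVec]; rfl
    rw [sub_eq_zero] at h11
    rw [h11, hh]
  -- one application of ℋ preserves the kernel
  have step : ∀ g : Fin N → ℂ, A *ᵥ g = μ • g →
      A *ᵥ (fun j => (lam j : ℂ) * Complex.exp (-Complex.I * (φ j : ℂ)) * conj (g j))
        = μ • (fun j => (lam j : ℂ) * Complex.exp (-Complex.I * (φ j : ℂ)) * conj (g j)) := by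
    intro g hg
    apply core2
    rw [hcomm g]
    funext j
    have : (A *ᵥ g) j = μ * g j := by rw [hg]; rfl
    rw [this]
    simp only [Pi.smul_apply, smul_eq_mul, _root_.map_mul, hμconj]
    ring
  -- exp factors cancel
  have hexp : ∀ j, Complex.exp (-Complex.I * (φ j : ℂ))
      * conj (Complex.exp (-Complex.I * (φ j : ℂ))) = 1 := by
    intro j
    rw [← Complex.exp_conj, ← Complex.exp_add]
    have : -Complex.I * (φ j : ℂ) + conj (-Complex.I * (φ j : ℂ)) = 0 := by
      simp [_root_.map_mul, _root_.map_neg, Complex.conj_I, Complex.conj_ofReal]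
    rw [this, Complex.exp_zero]
  -- induction: powers of λ² preserve the kernel
  have main : ∀ k : ℕ,
      A *ᵥ (fun j => ((lam j : ℂ)) ^ (2 * k) * f j)
        = μ • (fun j => ((lam j : ℂ)) ^ (2 * k) * f j) := by
    intro k
    induction k with
    | zero => simpa using hAf
    | succ k ih =>
      have h1 := step _ ih
      have h2 := step _ h1
      have heq : (fun j => (lam j : ℂ) * Complex.exp (-Complex.I * (φ j : ℂ)) *
          conj ((fun j => (lam j : ℂ) * Complex.exp (-Complex.I * (φ j : ℂ)) *
            conj (((lam j : ℂ)) ^ (2 * k) * f j)) j))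
          = (fun j => ((lam j : ℂ)) ^ (2 * (k + 1)) * f j) := by
        funext j
        simp only [_root_.map_mul, Complex.conj_conj, Complex.conj_ofReal, _root_.map_pow]
        have he := hexp j
        calc (lam j : ℂ) * Complex.exp (-Complex.I * (φ j : ℂ)) *
            ((lam j : ℂ) * conj (Complex.exp (-Complex.I * (φ j : ℂ))) *
              (((lam j : ℂ)) ^ (2 * k) * f j))
            = (Complex.exp (-Complex.I * (φ j : ℂ)) *
                conj (Complex.exp (-Complex.I * (φ j : ℂ)))) *
              ((lam j : ℂ) * (lam j : ℂ) * ((lam j : ℂ)) ^ (2 * k) * f j) := by ring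
          _ = ((lam j : ℂ)) ^ (2 * (k + 1)) * f j := by rw [he]; ring
      rw [heq] at h2
      exact h2
  have hzero : ∀ k : ℕ, ∑ j, ((lam j : ℂ)) ^ (2 * k) * f j = 0 := by
    intro k
    have := sumzero _ (main k)
    simpa using this
  -- Vandermonde argument
  have hinj2 : Function.Injective (fun j => ((lam j : ℂ)) ^ 2) := by
    intro a b hab
    simp only at hab
    have hab' : ((lam a) ^ 2 : ℝ) = (lam b) ^ 2 := by exact_mod_cast hab
    have : lam a = lam b := by nlinarith [hpos a, hpos b]
    exact hinj this
  have hfz : f = 0 := by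
    apply Matrix.eq_zero_of_forall_pow_sum_mul_pow_eq_zero hinj2
    intro i
    have := hzero (i : ℕ)
    calc ∑ j, f j * ((fun j => ((lam j : ℂ)) ^ 2) j) ^ (i : ℕ)
        = ∑ j, ((lam j : ℂ)) ^ (2 * (i : ℕ)) * f j := by
          refine Finset.sum_congr rfl fun j _ => ?_
          rw [← pow_mul]; ring
      _ = 0 := this
  exact hf hfz
end

section
/- Let 𝒜 be an N×N complex matrix such that for every subset L ⊆ {1,...,N} and all choices β_ℓ (ℓ∈L) in the closed upper half-plane, the |L|×|L| matrix D(β) + P_L 𝒜 P_L* is invertible, where P_L is the coordinate projection onto the coordinates in L. Then sup over all α₁,...,α_N in the closed upper half-plane of the operator norm ‖(D(α) + 𝒜)^{-1}‖ is finite (in particular each D(α)+𝒜 is invertible). -/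
/-!
Substitute `s_j = (α_j + i)⁻¹`. This maps the closed upper half-plane into the closed disk
`|s + i/2| ≤ 1/2`, and `D(s) (D(α) + 𝒜) = 1 + D(s) (𝒜 - i)`. The right-hand side makes sense on the
whole compact polydisk, including the points `s_j = 0` that stand for `α_j = ∞`, and it is
invertible there: a kernel vector vanishes where `s_j = 0`, and on the remaining coordinates `L` it
is a kernel vector of `D(β) + P_L 𝒜 P_L*` with `β = s⁻¹ - i` in the closed upper half-plane. So
`(D(α) + 𝒜)⁻¹ = (1 + D(s) (𝒜 - i))⁻¹ D(s)` is a continuous function of `s` on a compact set, hence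
bounded.
-/

open Matrix Metric Complex

lemma diagonal_add_submatrix_sub_smul_one {ι K : Type*} [DecidableEq ι] [Ring K]
    (A : Matrix ι ι K) (L : Finset ι) (β : ι → K) (c : K) :
    diagonal (fun i : L => β i) + (A - c • 1).submatrix (↑) (↑) =
      Matrix.of (fun i j : L => (if i = j then β i.1 - c else 0) + A i.1 j.1) := by
  ext i j
  by_cases hij : i = j
  · subst hij
    simp only [Matrix.add_apply, diagonal_apply_eq, submatrix_apply, Matrix.sub_apply,
      Matrix.smul_apply, one_apply_eq, smul_eq_mul, mul_one, of_apply, ↓reduceIte]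
    abel
  · simp [hij, one_apply, Subtype.val_injective.ne hij]

section Compression

variable {ι K : Type*} [Fintype ι] [DecidableEq ι] [Field K]

theorem isUnit_one_add_diagonal_mul {s : ι → K} {B : Matrix ι ι K} {L : Finset ι}
    (hL : ∀ i, i ∈ L ↔ s i ≠ 0)
    (hB : IsUnit (diagonal (fun i : L => (s i)⁻¹) + B.submatrix (↑) (↑))) :
    IsUnit (1 + diagonal s * B) := by
  rw [← mulVec_injective_iff_isUnit] at hB ⊢
  refine (injective_iff_map_eq_zero (mulVecLin _)).2 fun x hx => ?_
  have hx' : ∀ i, x i + s i * (B *ᵥ x) i = 0 := fun i => by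
    simpa [add_mulVec, ← mulVec_mulVec, mulVec_diagonal] using congrFun hx i
  have hout : ∀ i ∉ L, x i = 0 := fun i hi => by
    simpa [not_ne_iff.1 ((hL i).not.1 hi)] using hx' i
  have hrestrict : B.submatrix (↑) (↑) *ᵥ (fun i : L => x i) = fun i : L => (B *ᵥ x) i := by
    funext i
    simp only [mulVec, dotProduct, submatrix_apply]
    exact (Finset.sum_coe_sort L fun j => B i j * x j).trans
      (Finset.sum_subset (Finset.subset_univ L) fun j _ hj => by simp [hout j hj])
  have hzero : (diagonal (fun i : L => (s i)⁻¹) + B.submatrix (↑) (↑)) *ᵥ (fun i : L => x i) =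
      (diagonal (fun i : L => (s i)⁻¹) + B.submatrix (↑) (↑)) *ᵥ 0 := by
    rw [add_mulVec, hrestrict, mulVec_zero]
    funext i
    have hsi := (hL i).1 i.2
    rw [Pi.add_apply, mulVec_diagonal, Pi.zero_apply]
    field_simp
    linear_combination hx' i
  have hxL := congrFun (hB hzero)
  funext i
  by_cases hi : i ∈ L
  · exact hxL ⟨i, hi⟩
  · exact hout i hi

lemma diagonal_inv_mul_diagonal_add (α : ι → K) (A : Matrix ι ι K) {c : K}
    (hα : ∀ i, α i + c ≠ 0) :
    diagonal (fun i => (α i + c)⁻¹) * (diagonal α + A) =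
      1 + diagonal (fun i => (α i + c)⁻¹) * (A - c • 1) := by
  have hsplit : diagonal α + A = diagonal (fun i => α i + c) + (A - c • 1) := by
    rw [smul_one_eq_diagonal, ← diagonal_add]
    abel
  rw [hsplit, mul_add, diagonal_mul_diagonal, ← diagonal_one]
  simp only [inv_mul_cancel₀ (hα _)]

end Compression

section Disk

lemma mem_closedBall_neg_I_div_two_iff (s : ℂ) :
    s ∈ closedBall (-I / 2) (1 / 2) ↔ normSq s + s.im ≤ 0 := by
  have hsq : normSq (s - -I / 2) = normSq s + s.im + 1 / 4 := by
    simp only [normSq_apply, sub_re, sub_im, neg_re, neg_im, div_ofNat_re, div_ofNat_im, I_re, I_im]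
    ring
  rw [mem_closedBall, dist_eq, ← sq_le_sq₀ (norm_nonneg _) (by norm_num), ← normSq_eq_norm_sq, hsq]
  constructor <;> intro <;> linarith

lemma add_I_ne_zero {z : ℂ} (hz : 0 ≤ z.im) : z + I ≠ 0 := fun h => by
  have := congrArg im h
  simp only [add_im, I_im, zero_im] at this
  linarith

lemma inv_add_I_mem_closedBall {z : ℂ} (hz : 0 ≤ z.im) :
    (z + I)⁻¹ ∈ closedBall (-I / 2) (1 / 2) := by
  rw [mem_closedBall_neg_I_div_two_iff, normSq_inv, inv_im, inv_eq_one_div, ← add_div]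
  exact div_nonpos_of_nonpos_of_nonneg (by rw [add_im, I_im]; linarith) (normSq_nonneg _)

lemma im_inv_sub_I_nonneg {s : ℂ} (hs : s ∈ closedBall (-I / 2) (1 / 2)) (hne : s ≠ 0) :
    0 ≤ (s⁻¹ - I).im := by
  rw [mem_closedBall_neg_I_div_two_iff] at hs
  have hpos : 0 < normSq s := normSq_pos.2 hne
  rw [sub_im, inv_im, I_im, neg_div, sub_nonneg, le_neg, div_le_iff₀ hpos]
  linarith

end Disk

section Bound

attribute [local instance] Matrix.linftyOpSeminormedAddCommGroup

variable {X : Type*} [TopologicalSpace X] {K : Set X}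

lemma ContinuousOn.matrix_inv {n 𝕜 : Type*} [Fintype n] [DecidableEq n] [NormedField 𝕜]
    {F : X → Matrix n n 𝕜} (hF : ContinuousOn F K) (hunit : ∀ x ∈ K, IsUnit (F x)) :
    ContinuousOn (fun x => (F x)⁻¹) K := fun x hx =>
  (continuousAt_matrix_inv _ <| by
    rw [Ring.inverse_eq_inv']
    exact continuousAt_inv₀ ((isUnit_iff_isUnit_det _).1 (hunit x hx)).ne_zero).comp_continuousWithinAt
    (hF x hx)

lemma IsCompact.exists_bound_mulVec {m n α : Type*} [Fintype m] [Fintype n]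
    [NonUnitalSeminormedRing α] (hK : IsCompact K) {F : X → Matrix m n α}
    (hF : ContinuousOn F K) : ∃ C, ∀ x ∈ K, ∀ v, ‖F x *ᵥ v‖ ≤ C * ‖v‖ := by
  obtain ⟨C, hC⟩ := hK.exists_bound_of_continuousOn (f := F) hF
  exact ⟨C, fun x hx v =>
    (linfty_opNorm_mulVec _ _).trans (mul_le_mul_of_nonneg_right (hC x hx) (norm_nonneg _))⟩

end Bound

/-- If for every subset `L ⊆ {1,...,N}` and all `β_ℓ` in the closed upper half-plane the
compressed matrix `D(β) + P_L 𝒜 P_L*` is invertible, then `D(α) + 𝒜` is invertible for all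
`α₁,...,α_N` in the closed upper half-plane, with a uniform bound on the inverses. -/
theorem uniform_invertibility_of_shifted_matrix
    (N : ℕ) (A : Matrix (Fin N) (Fin N) ℂ)
    (h : ∀ (L : Finset (Fin N)) (β : Fin N → ℂ), (∀ ℓ ∈ L, 0 ≤ (β ℓ).im) →
      IsUnit (Matrix.of (fun i j : L => (if i = j then β i.1 else 0) + A i.1 j.1))) :
    ∃ C : ℝ, ∀ α : Fin N → ℂ, (∀ j, 0 ≤ (α j).im) →
      IsUnit (Matrix.diagonal α + A) ∧
      ∀ X : Fin N → ℂ, ‖(Matrix.diagonal α + A)⁻¹ *ᵥ X‖ ≤ C * ‖X‖ := by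
  classical
  let P : Set (Fin N → ℂ) := Set.univ.pi fun _ => closedBall (-I / 2) (1 / 2)
  let M : (Fin N → ℂ) → Matrix (Fin N) (Fin N) ℂ := fun s => 1 + diagonal s * (A - I • 1)
  have hM : ∀ s ∈ P, IsUnit (M s) := fun s hs => by
    refine isUnit_one_add_diagonal_mul (L := Finset.univ.filter (s · ≠ 0)) (by simp) ?_
    rw [diagonal_add_submatrix_sub_smul_one A _ (fun j => (s j)⁻¹) I]
    exact h (Finset.univ.filter (s · ≠ 0)) (fun j => (s j)⁻¹ - I) fun j hj => im_inv_sub_I_nonneg (hs j trivial) (by simpa using hj)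
  have hMcont : Continuous M := by fun_prop
  obtain ⟨C, hC⟩ := (isCompact_univ_pi fun _ => isCompact_closedBall _ _).exists_bound_mulVec
    ((hMcont.continuousOn.matrix_inv hM).mul continuous_id.matrix_diagonal.continuousOn)
  refine ⟨C, fun α hα => ?_⟩
  let s : Fin N → ℂ := fun j => (α j + I)⁻¹
  have hs : s ∈ P := fun j _ => inv_add_I_mem_closedBall (hα j)
  have hleft : ((M s)⁻¹ * diagonal s) * (diagonal α + A) = 1 := by
    rw [mul_assoc, diagonal_inv_mul_diagonal_add α A fun j => add_I_ne_zero (hα j),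
      nonsing_inv_mul _ ((isUnit_iff_isUnit_det _).1 (hM s hs))]
  refine ⟨(isUnit_iff_isUnit_det _).2 (isUnit_det_of_left_inverse hleft), fun X => ?_⟩
  rw [inv_eq_left_inv hleft]
  exact hC s hs X
end

section
/- Let 𝒜 be an N×N complex matrix such that Im 𝒜 ≥ 0 and for every real diagonal matrix D(α) the matrix 𝒜 + D(α) has no real eigenvalues. Then for all ζ₁,...,ζ_N in the open upper half-plane, the matrix 𝒜 + D(ζ) is invertible and all its eigenvalues lie in the open upper half-plane. -/
open Matrix
open scoped ComplexOrder

/-!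
For `f ≠ 0` the imaginary part of `⟨(𝒜 + D(ζ)) f, f⟩` is `⟨(Im 𝒜) f, f⟩ + ∑ Im ζⱼ |fⱼ|² > 0`,
because `Im (𝒜 + D(ζ)) = Im 𝒜 + D(Im ζ)` is positive definite. An eigenvector for `μ` turns
this into `Im μ ‖f‖² > 0`, and a kernel vector would give `0 > 0`.
-/

namespace Matrix

variable {n : Type*}

noncomputable def imPart (B : Matrix n n ℂ) : Matrix n n ℂ := (2 * Complex.I)⁻¹ • (B - Bᴴ)

theorem imPart_add_diagonal [DecidableEq n] (A : Matrix n n ℂ) (ζ : n → ℂ) :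
    imPart (A + diagonal ζ) = imPart A + diagonal (fun j => ((ζ j).im : ℂ)) := by
  rw [imPart, imPart, conjTranspose_add, add_sub_add_comm, smul_add, diagonal_conjTranspose,
    diagonal_sub, ← diagonal_smul]
  congr 2 with j
  rw [Pi.smul_apply, Pi.star_apply, Complex.star_def, Complex.im_eq_sub_conj, smul_eq_mul,
    div_eq_inv_mul]

variable [Fintype n]

theorem im_star_dotProduct_mulVec (B : Matrix n n ℂ) (f : n → ℂ) :
    (star f ⬝ᵥ B *ᵥ f).im = (star f ⬝ᵥ imPart B *ᵥ f).re := by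
  have hadj : star f ⬝ᵥ Bᴴ *ᵥ f = star (star f ⬝ᵥ B *ᵥ f) := by
    rw [star_dotProduct, star_mulVec, conjTranspose_conjTranspose, dotProduct_mulVec]
  rw [imPart, smul_mulVec, dotProduct_smul, sub_mulVec, dotProduct_sub, hadj, smul_eq_mul,
    mul_comm, ← div_eq_mul_inv, Complex.star_def, ← Complex.im_eq_sub_conj, Complex.ofReal_re]

theorem im_star_dotProduct_mulVec_pos {B : Matrix n n ℂ} (hB : (imPart B).PosDef)
    {f : n → ℂ} (hf : f ≠ 0) : 0 < (star f ⬝ᵥ B *ᵥ f).im := by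
  rw [im_star_dotProduct_mulVec]
  exact (Complex.pos_iff.mp (hB.dotProduct_mulVec_pos hf)).1

theorem im_pos_of_mulVec_eq_smul {B : Matrix n n ℂ} {f : n → ℂ} {μ : ℂ}
    (hB : 0 < (star f ⬝ᵥ B *ᵥ f).im) (hμ : B *ᵥ f = μ • f) : 0 < μ.im := by
  have hf : f ≠ 0 := by
    rintro rfl
    simp at hB
  obtain ⟨hnorm_pos, hnorm_real⟩ := Complex.pos_iff.mp (dotProduct_star_self_pos_iff.mpr hf)
  rw [hμ, dotProduct_smul, smul_eq_mul, Complex.mul_im, ← hnorm_real, mul_zero, zero_add] at hB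
  exact pos_of_mul_pos_left hB hnorm_pos.le

theorem isUnit_of_im_star_dotProduct_mulVec_pos [DecidableEq n] {B : Matrix n n ℂ}
    (hB : ∀ f ≠ 0, 0 < (star f ⬝ᵥ B *ᵥ f).im) : IsUnit B := by
  rw [isUnit_iff_isUnit_det, isUnit_iff_ne_zero]
  intro hdet
  obtain ⟨f, hf, hBf⟩ := exists_mulVec_eq_zero_iff.mpr hdet
  simpa [hBf] using hB f hf

end Matrix

theorem shifted_matrix_eigenvalues_upper_general
    (N : ℕ) (A : Matrix (Fin N) (Fin N) ℂ)
    (hIm : ((2 * Complex.I)⁻¹ • (A - Aᴴ)).PosSemidef) :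
    ∀ ζ : Fin N → ℂ, (∀ j, 0 < (ζ j).im) →
      IsUnit (A + Matrix.diagonal ζ) ∧
      ∀ (μ : ℂ) (f : Fin N → ℂ), f ≠ 0 → (A + Matrix.diagonal ζ) *ᵥ f = μ • f → 0 < μ.im := by
  intro ζ hζ
  have himPart : (imPart (A + diagonal ζ)).PosDef := by
    rw [imPart_add_diagonal]
    exact PosDef.posSemidef_add hIm (.diagonal fun j => by simpa using hζ j)
  have hform : ∀ f ≠ 0, 0 < (star f ⬝ᵥ (A + diagonal ζ) *ᵥ f).im :=
    fun f hf => im_star_dotProduct_mulVec_pos himPart hf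
  exact ⟨isUnit_of_im_star_dotProduct_mulVec_pos hform,
    fun μ f hf hμ => im_pos_of_mulVec_eq_smul (hform f hf) hμ⟩

/-- Let `𝒜` satisfy `Im 𝒜 ≥ 0` and suppose `𝒜 + D(α)` has no real eigenvalue for every real
diagonal `D(α)`.  Then for `ζ_j` in the open upper half-plane, `𝒜 + D(ζ)` is invertible and
all its eigenvalues lie in the open upper half-plane. -/
theorem shifted_matrix_eigenvalues_upper
    (N : ℕ) (A : Matrix (Fin N) (Fin N) ℂ)
    (hIm : ((2 * Complex.I)⁻¹ • (A - Aᴴ)).PosSemidef)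
    (hreal : ∀ (α : Fin N → ℝ) (μ : ℝ) (f : Fin N → ℂ), f ≠ 0 →
      (A + Matrix.diagonal (fun j => (α j : ℂ))) *ᵥ f = (μ : ℂ) • f → False) :
    ∀ ζ : Fin N → ℂ, (∀ j, 0 < (ζ j).im) →
      IsUnit (A + Matrix.diagonal ζ) ∧
      ∀ (μ : ℂ) (f : Fin N → ℂ), f ≠ 0 → (A + Matrix.diagonal ζ) *ᵥ f = μ • f → 0 < μ.im :=
  shifted_matrix_eigenvalues_upper_general N A hIm
end

section
/- Let B be an N×N complex matrix, β ∈ ℂᴺ, with BB* + ⟨·,β⟩β = I. Fix complex numbers ζ_j with |ζ_j| = 1 such that I - BD(ζ) is invertible, and set A = BD(ζ), p = (I - A)^{-1}β. Then for each j, |p_j|² = 1 + [(I-A)^{-1}A]_{jj} + conj([(I-A)^{-1}A]_{jj}); equivalently |p_j|² = 1 + [(I-A)^{-1}B]_{jj} ζ_j + conj([(I-A)^{-1}B]_{jj} ζ_j). -/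
open Matrix ComplexConjugate

namespace Matrix

theorem vecMulVec_star_apply_self {n : Type*} (w : n → ℂ) (j : n) :
    vecMulVec w (star w) j j = (‖w j‖ ^ 2 : ℝ) := by
  rw [vecMulVec_apply, Pi.star_apply, Complex.star_def, Complex.mul_conj,
    Complex.normSq_eq_norm_sq]

variable {n : Type*} [Fintype n]

theorem mul_vecMulVec_star_mul_conjTranspose {α : Type*} [CommRing α] [StarRing α]
    (M : Matrix n n α) (v : n → α) :
    M * vecMulVec v (star v) * Mᴴ = vecMulVec (M *ᵥ v) (star (M *ᵥ v)) := by
  rw [mul_vecMulVec, vecMulVec_mul, star_mulVec]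

theorem diagonal_mul_conjTranspose_self [DecidableEq n] {K : Type*} [RCLike K] {ζ : n → K}
    (hζ : ∀ j, ‖ζ j‖ = 1) : diagonal ζ * (diagonal ζ)ᴴ = 1 := by
  rw [diagonal_conjTranspose, diagonal_mul_diagonal, ← diagonal_one]
  congr 1
  funext j
  rw [Pi.star_apply, RCLike.star_def, RCLike.mul_conj, hζ j]
  simp

theorem mul_diagonal_mul_conjTranspose_self [DecidableEq n] {K : Type*} [RCLike K]
    (B : Matrix n n K) {ζ : n → K} (hζ : ∀ j, ‖ζ j‖ = 1) :
    B * diagonal ζ * (B * diagonal ζ)ᴴ = B * Bᴴ := by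
  rw [conjTranspose_mul, Matrix.mul_assoc, ← Matrix.mul_assoc (diagonal ζ),
    diagonal_mul_conjTranspose_self hζ, Matrix.one_mul]

/-- `1 - A Aᴴ = (1 - A)(1 - A)ᴴ + (1 - A) Aᴴ + A (1 - A)ᴴ`, so conjugating by `(1 - A)⁻¹`
cancels each outer factor `1 - A` or `(1 - A)ᴴ`. -/
theorem inv_one_sub_mul_one_sub_mul_conjTranspose_self_mul [DecidableEq n] {α : Type*}
    [CommRing α] [StarRing α] (A : Matrix n n α) (h : IsUnit (1 - A)) :
    (1 - A)⁻¹ * (1 - A * Aᴴ) * ((1 - A)⁻¹)ᴴ =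
      1 + (1 - A)⁻¹ * A + ((1 - A)⁻¹ * A)ᴴ := by
  set M := 1 - A with hM
  have hdet : IsUnit M.det := (isUnit_iff_isUnit_det M).mp h
  have hdetH : IsUnit Mᴴ.det := by rw [det_conjTranspose]; exact hdet.star
  have hsplit : 1 - A * Aᴴ = M * Mᴴ + M * Aᴴ + A * Mᴴ := by
    simp only [hM, conjTranspose_sub, conjTranspose_one]
    noncomm_ring
  have hinvM := nonsing_inv_mul M hdet
  have hinvMH := mul_nonsing_inv Mᴴ hdetH
  rw [hsplit, conjTranspose_mul, conjTranspose_nonsing_inv]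
  calc M⁻¹ * (M * Mᴴ + M * Aᴴ + A * Mᴴ) * Mᴴ⁻¹
      = (M⁻¹ * M) * (Mᴴ * Mᴴ⁻¹) + (M⁻¹ * M) * (Aᴴ * Mᴴ⁻¹)
          + (M⁻¹ * A) * (Mᴴ * Mᴴ⁻¹) := by noncomm_ring
    _ = 1 + M⁻¹ * A + Aᴴ * Mᴴ⁻¹ := by
      rw [hinvM, hinvMH, Matrix.one_mul, Matrix.one_mul, Matrix.mul_one]
      abel

end Matrix

/-- Let `B B* + ⟨·,β⟩β = I`, let `ζ_j` be unimodular with `I - B D(ζ)` invertible, and put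
`A = B D(ζ)`, `p = (I - A)⁻¹ β`.  Then for each `j`,
`|p_j|² = 1 + [(I-A)⁻¹ A]_{jj} + conj([(I-A)⁻¹ A]_{jj})`. -/
theorem isometric_multiplier_modulus_identity
    (N : ℕ) (B : Matrix (Fin N) (Fin N) ℂ) (β : Fin N → ℂ)
    (hB : B * Bᴴ + Matrix.vecMulVec β (star β) = 1)
    (ζ : Fin N → ℂ) (hζ : ∀ j, ‖ζ j‖ = 1)
    (hinv : IsUnit ((1 : Matrix (Fin N) (Fin N) ℂ) - B * Matrix.diagonal ζ)) :
    ∀ j : Fin N,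
      ((‖(((1 : Matrix (Fin N) (Fin N) ℂ) - B * Matrix.diagonal ζ)⁻¹ *ᵥ β) j‖ ^ 2 : ℝ) : ℂ)
        = 1 + (((1 : Matrix (Fin N) (Fin N) ℂ) - B * Matrix.diagonal ζ)⁻¹ *
                (B * Matrix.diagonal ζ)) j j
            + conj ((((1 : Matrix (Fin N) (Fin N) ℂ) - B * Matrix.diagonal ζ)⁻¹ *
                (B * Matrix.diagonal ζ)) j j) := by
  intro j
  set A := B * diagonal ζ
  have hβ : vecMulVec β (star β) = 1 - A * Aᴴ := by
    rw [mul_diagonal_mul_conjTranspose_self B hζ, ← hB, add_sub_cancel_left]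
  rw [← vecMulVec_star_apply_self, ← mul_vecMulVec_star_mul_conjTranspose, hβ,
    inv_one_sub_mul_one_sub_mul_conjTranspose_self_mul A hinv,
    Matrix.add_apply, Matrix.add_apply, one_apply_eq, conjTranspose_apply, Complex.star_def]
end

section
/- Let K_θ be a finite-dimensional model space and A_θ its bounded generator satisfying Im A_θ = (1/(4π)) ⟨·, g⟩ g where g = 1-θ. Let H be a bounded anti-linear operator on K_θ (the restriction of a Hankel operator) satisfying A_θ* H = H A_θ. Then A_θ H² - H² A_θ = (i/(2π)) ⟨·, H u⟩ g - (i/(2π)) ⟨·, u⟩ u, where u = H g. -/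
open ComplexConjugate
open scoped InnerProductSpace

/-!
Since `A* H = H A`, the commutator `A H - H A` equals `(A - A*) H`, the rank-one operator
`2i Im A` composed with `H`. Hence `A H² - H² A = (A H - H A) H + H (A H - H A)` is a sum of two
rank-one terms; pulling the anti-linear `H` through the second one conjugates its scalar
`i/(2π)` to `-i/(2π)`, and the symmetry of `H` moves `H` across the inner products.
-/

section

variable {E : Type*} [NormedAddCommGroup E] [InnerProductSpace ℂ E]

theorem inner_apply_apply_of_symm {H : E → E} (hsym : ∀ f h : E, ⟪h, H f⟫_ℂ = ⟪f, H h⟫_ℂ)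
    (f g : E) : ⟪g, H (H f)⟫_ℂ = ⟪H (H g), f⟫_ℂ := by
  rw [hsym (H f) g, ← inner_conj_symm, hsym f (H g), inner_conj_symm]

theorem conj_inner_apply_of_symm {H : E → E} (hsym : ∀ f h : E, ⟪h, H f⟫_ℂ = ⟪f, H h⟫_ℂ)
    (f g : E) : conj ⟪g, H f⟫_ℂ = ⟪H g, f⟫_ℂ := by
  rw [hsym f g, inner_conj_symm]

theorem commutator_sq_apply_of_sub_eq_rankOne (A B : E →ₗ[ℂ] E) (H : E →ₛₗ[starRingEnd ℂ] E)
    (c : ℂ) (g : E) (hAB : ∀ f : E, A f - B f = c • (⟪g, f⟫_ℂ • g))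
    (hcomm : ∀ f : E, B (H f) = H (A f)) (f : E) :
    A (H (H f)) - H (H (A f))
      = c • (⟪g, H (H f)⟫_ℂ • g) + conj c • (conj ⟪g, H f⟫_ℂ • H g) := by
  have hAH : ∀ f : E, A (H f) = H (A f) + c • (⟪g, H f⟫_ℂ • g) := fun f =>
    sub_eq_iff_eq_add'.mp (hcomm f ▸ hAB (H f))
  rw [hAH, hAH, map_add, map_smulₛₗ, map_smulₛₗ]
  abel

end

theorem conj_I_div_two_pi :
    conj (Complex.I / (2 * (Real.pi : ℂ))) = -(Complex.I / (2 * Real.pi)) := by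
  simp only [map_div₀, Complex.conj_I, map_mul, Complex.conj_ofReal, map_ofNat, neg_div]

/-- Commutation relation for an anti-linear "Hankel" operator `H` on a finite-dimensional
model space: if `Im A = (1/(4π)) ⟨·,g⟩g` (inner products linear in the first factor, i.e.
`⟨f,g⟩ = ⟪g,f⟫` in Mathlib's convention), `H` is symmetric anti-linear and `A* H = H A`,
then `A H² - H² A = (i/(2π)) ⟨·, H u⟩ g - (i/(2π)) ⟨·, u⟩ u` where `u = H g`. -/
theorem hankel_commutator_identity
    {E : Type*} [NormedAddCommGroup E] [InnerProductSpace ℂ E] [FiniteDimensional ℂ E]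
    (A : E →ₗ[ℂ] E) (H : E →ₛₗ[starRingEnd ℂ] E) (g : E)
    (hIm : ∀ f : E, A f - (LinearMap.adjoint A) f
        = (Complex.I / (2 * (Real.pi : ℂ))) • ((inner ℂ g f : ℂ) • g))
    (hsym : ∀ f h : E, (inner ℂ h (H f) : ℂ) = inner ℂ f (H h))
    (hcomm : ∀ f : E, (LinearMap.adjoint A) (H f) = H (A f)) :
    ∀ f : E, A (H (H f)) - H (H (A f))
      = (Complex.I / (2 * (Real.pi : ℂ))) • ((inner ℂ (H (H g)) f : ℂ) • g)
        - (Complex.I / (2 * (Real.pi : ℂ))) • ((inner ℂ (H g) f : ℂ) • H g) := by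
  intro f
  rw [commutator_sq_apply_of_sub_eq_rankOne A _ H _ g hIm hcomm, conj_I_div_two_pi,
    inner_apply_apply_of_symm hsym, conj_inner_apply_of_symm hsym, neg_smul, sub_eq_add_neg]
end

section
/- Let g₁,...,g_N ∈ H²(ℂ₊) be mutually orthogonal nonzero vectors, λ₁ > ... > λ_N > 0, φ_j real, and suppose H_u g_j = λ_j e^{-iφ_j} g_j for an anti-linear operator H_u with H_u² g_j = λ_j² g_j. Let A be a bounded linear operator with Im A = (1/(4π))⟨·, g⟩g where g = Σ g_j, and suppose A* H_u = H_u A on the span of the g_j. Define ω_j = ⟨A H_u g_j, H_u g_j⟩. Then ω_j = λ_j² ⟨A g_j, g_j⟩ and Im ω_j = (λ_j²/(4π)) ‖g_j‖⁴ > 0. -/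
open ComplexConjugate

/-!
`H g_j` is a multiple of `g_j` by a scalar of modulus `λ_j`, so `ω_j = λ_j² ⟨A g_j, g_j⟩`.
The imaginary part of `⟨A g_j, g_j⟩` is `⟨(Im A) g_j, g_j⟩ = |⟨g_j, g⟩|² / (4π)`, and by
orthogonality `⟨g_j, g⟩ = ‖g_j‖²`.
-/

section

variable {𝕜 E : Type*} [RCLike 𝕜] [NormedAddCommGroup E] [InnerProductSpace 𝕜 E]

theorem sum_inner_eq_norm_sq_of_orthogonal {ι : Type*} [Fintype ι] (g : ι → E)
    (horth : ∀ j k, j ≠ k → (inner 𝕜 (g j) (g k) : 𝕜) = 0) (j : ι) :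
    (inner 𝕜 (∑ k, g k) (g j) : 𝕜) = (‖g j‖ : 𝕜) ^ 2 := by
  rw [sum_inner, Finset.sum_eq_single j (fun k _ hkj => horth k j hkj) (by simp),
    inner_self_eq_norm_sq_to_K]

theorem inner_smul_apply_smul (A : E →ₗ[𝕜] E) (c : 𝕜) (x : E) :
    (inner 𝕜 (c • x) (A (c • x)) : 𝕜) = (‖c‖ : 𝕜) ^ 2 * inner 𝕜 x (A x) := by
  rw [map_smul, inner_smul_left, inner_smul_right, ← mul_assoc, mul_comm (conj c),
    RCLike.mul_conj]

end

theorem im_inner_apply_self_of_sub_adjoint_eq {E : Type*} [NormedAddCommGroup E]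
    [InnerProductSpace ℂ E] [FiniteDimensional ℂ E] {A : E →ₗ[ℂ] E} {c : ℝ} {v : E}
    (hA : ∀ f, A f - LinearMap.adjoint A f = (2 * Complex.I * c) • ((inner ℂ v f : ℂ) • v))
    (x : E) : (inner ℂ x (A x) : ℂ).im = c * ‖(inner ℂ v x : ℂ)‖ ^ 2 := by
  have h := congrArg (inner ℂ x) (hA x)
  rw [inner_sub_right, LinearMap.adjoint_inner_right, ← inner_conj_symm (A x) x,
    Complex.sub_conj, inner_smul_right, inner_smul_right, ← inner_conj_symm x v,
    Complex.mul_conj', ← Complex.ofReal_pow] at h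
  have h_real : (((2 * (inner ℂ x (A x)).im : ℝ)) : ℂ) * Complex.I
      = ((2 * (c * ‖(inner ℂ v x : ℂ)‖ ^ 2) : ℝ) : ℂ) * Complex.I := by
    rw [h]; push_cast; ring
  linarith [Complex.ofReal_injective (mul_right_cancel₀ Complex.I_ne_zero h_real)]

/-- `⟨x, y⟩` of the informal statement, linear in `x`, is `inner ℂ y x`. -/
theorem omega_imaginary_part_positive_general
    {E : Type*} [NormedAddCommGroup E] [InnerProductSpace ℂ E] [FiniteDimensional ℂ E]
    (N : ℕ) (g : Fin N → E) (lam φ : Fin N → ℝ)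
    (hgne : ∀ j, g j ≠ 0)
    (horth : ∀ j k, j ≠ k → (inner ℂ (g j) (g k) : ℂ) = 0)
    (hpos : ∀ j, 0 < lam j)
    (H : E →ₛₗ[starRingEnd ℂ] E)
    (hHg : ∀ j, H (g j) = ((lam j : ℂ) * Complex.exp (-Complex.I * (φ j : ℂ))) • g j)
    (A : E →ₗ[ℂ] E)
    (hIm : ∀ f : E, A f - (LinearMap.adjoint A) f
        = (Complex.I / (2 * (Real.pi : ℂ))) • ((inner ℂ (∑ j, g j) f : ℂ) • ∑ j, g j)) :
    ∀ j : Fin N,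
      (inner ℂ (H (g j)) (A (H (g j))) : ℂ) = ((lam j : ℂ)) ^ 2 * inner ℂ (g j) (A (g j)) ∧
      ((inner ℂ (H (g j)) (A (H (g j))) : ℂ)).im = (lam j) ^ 2 / (4 * Real.pi) * ‖g j‖ ^ 4 ∧
      0 < ((inner ℂ (H (g j)) (A (H (g j))) : ℂ)).im := by
  intro j
  have hω : (inner ℂ (H (g j)) (A (H (g j))) : ℂ)
      = (lam j : ℂ) ^ 2 * inner ℂ (g j) (A (g j)) := by
    have hc : ‖(lam j : ℂ) * Complex.exp (-Complex.I * (φ j : ℂ))‖ = lam j := by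
      simp [Complex.norm_exp, abs_of_pos (hpos j)]
    rw [hHg, inner_smul_apply_smul, hc, RCLike.ofReal_eq_complex_ofReal]
  have hA : ∀ f, A f - LinearMap.adjoint A f
      = (2 * Complex.I * ((1 / (4 * Real.pi) : ℝ) : ℂ))
        • ((inner ℂ (∑ j, g j) f : ℂ) • ∑ j, g j) := by
    intro f
    rw [hIm]
    congr 1
    push_cast
    field_simp
    ring
  have hz : (inner ℂ (g j) (A (g j)) : ℂ).im = ‖g j‖ ^ 4 / (4 * Real.pi) := by
    rw [im_inner_apply_self_of_sub_adjoint_eq hA, sum_inner_eq_norm_sq_of_orthogonal g horth]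
    norm_cast
    rw [abs_of_nonneg (by positivity)]
    ring
  have him : (inner ℂ (H (g j)) (A (H (g j))) : ℂ).im
      = lam j ^ 2 / (4 * Real.pi) * ‖g j‖ ^ 4 := by
    rw [hω, ← Complex.ofReal_pow, Complex.im_ofReal_mul, hz]
    ring
  refine ⟨hω, him, ?_⟩
  rw [him]
  have := hpos j
  have := norm_pos_iff.mpr (hgne j)
  positivity

/-- Positivity of `Im ω_j`: with mutually orthogonal nonzero `g_j`, an anti-linear symmetric
`H` with `H g_j = λ_j e^{-iφ_j} g_j`, `H² g_j = λ_j² g_j`, and `A` with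
`Im A = (1/(4π)) ⟨·, g⟩ g` (`g = Σ g_j`) intertwining `A* H = H A` on the span of the `g_j`,
the numbers `ω_j = ⟨A H g_j, H g_j⟩` satisfy `ω_j = λ_j² ⟨A g_j, g_j⟩` and
`Im ω_j = (λ_j²/(4π)) ‖g_j‖⁴ > 0`.  (Inner products are linear in the first factor:
`⟨x,y⟩ = ⟪y,x⟫` in Mathlib's convention.) -/
theorem omega_imaginary_part_positive
    {E : Type*} [NormedAddCommGroup E] [InnerProductSpace ℂ E] [FiniteDimensional ℂ E]
    (N : ℕ) (g : Fin N → E) (lam φ : Fin N → ℝ)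
    (hgne : ∀ j, g j ≠ 0)
    (horth : ∀ j k, j ≠ k → (inner ℂ (g j) (g k) : ℂ) = 0)
    (hpos : ∀ j, 0 < lam j)
    (hdec : ∀ j k : Fin N, j < k → lam k < lam j)
    (H : E →ₛₗ[starRingEnd ℂ] E)
    (hsym : ∀ f h : E, (inner ℂ h (H f) : ℂ) = inner ℂ f (H h))
    (hHg : ∀ j, H (g j) = ((lam j : ℂ) * Complex.exp (-Complex.I * (φ j : ℂ))) • g j)
    (hH2 : ∀ j, H (H (g j)) = (((lam j : ℂ)) ^ 2) • g j)
    (A : E →ₗ[ℂ] E)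
    (hIm : ∀ f : E, A f - (LinearMap.adjoint A) f
        = (Complex.I / (2 * (Real.pi : ℂ))) • ((inner ℂ (∑ j, g j) f : ℂ) • ∑ j, g j))
    (hcomm : ∀ f ∈ Submodule.span ℂ (Set.range g),
      (LinearMap.adjoint A) (H f) = H (A f)) :
    ∀ j : Fin N,
      (inner ℂ (H (g j)) (A (H (g j))) : ℂ) = ((lam j : ℂ)) ^ 2 * inner ℂ (g j) (A (g j)) ∧
      ((inner ℂ (H (g j)) (A (H (g j))) : ℂ)).im = (lam j) ^ 2 / (4 * Real.pi) * ‖g j‖ ^ 4 ∧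
      0 < ((inner ℂ (H (g j)) (A (H (g j))) : ℂ)).im :=
  omega_imaginary_part_positive_general N g lam φ hgne horth hpos H hHg A hIm
end
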